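/- Let n ≥ 1, let γ ∈ ℂ be a primitive n-th root of unity, and let s, t be n × n unitary matrices with s t s⁻¹ t⁻¹ = γ · I_n. Suppose w is a traceless skew-Hermitian n × n matrix (wᴴ = −w, trace(w) = 0) such that for all skew-Hermitian matrices x and y, trace(w · (x t s⁻¹ t⁻¹ + s y s⁻¹ t⁻¹ − s t s⁻¹ x s⁻¹ t⁻¹ − s t s⁻¹ t⁻¹ y t⁻¹)) = 0. Then w = 0. (This expresses that γ · I_n is a regular value of the commutator map μ(s,t) = [s,t] from U_n × U_n to SU_n.) -/

import Mathlib

/-!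
Testing the orthogonality of `w` against tangent vectors `(x, 0)` and `(0, y)` shows that `w`
commutes with `t` and with `s`: the trace form is nondegenerate already on skew-Hermitian
matrices, since these span all matrices over `ℂ`. Now `s t = γ t s`, so if `v` is an eigenvector
of `s` (with eigenvalue `μ ≠ 0`) inside an eigenspace of `w`, then `v, t v, …, tⁿ⁻¹ v` are
eigenvectors of `s` for the `n` distinct eigenvalues `γᵏ μ`. They lie in the same eigenspace of
`w` and span `ℂⁿ`, so `w` is scalar, and a traceless scalar matrix is zero.
-/

open Matrix

theorem mul_pow_eq_smul_pow_mul {R A : Type*} [CommSemiring R] [Semiring A] [Algebra R A]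
    {s t : A} {γ : R} (h : s * t = γ • (t * s)) (k : ℕ) : s * t ^ k = γ ^ k • (t ^ k * s) := by
  induction k with
  | zero => simp
  | succ k ih =>
    rw [pow_succ, ← mul_assoc, ih, smul_mul_assoc, mul_assoc, h, mul_smul_comm, smul_smul,
      ← pow_succ, ← mul_assoc, ← pow_succ]

namespace Module.End

variable {K V : Type*} [Field K] [AddCommGroup V] [Module K V]

theorem HasEigenvector.pow_apply_of_mul_eq_smul_mul {s t : End K V} {γ μ : K} {v : V}
    (hst : s * t = γ • (t * s)) (ht : Function.Injective t) (hv : s.HasEigenvector μ v)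
    (k : ℕ) : s.HasEigenvector (γ ^ k * μ) ((t ^ k) v) := by
  refine hasEigenvector_iff.mpr ⟨mem_eigenspace_iff.mpr ?_, ?_⟩
  · rw [← mul_apply, mul_pow_eq_smul_pow_mul hst, LinearMap.smul_apply, mul_apply,
      hv.apply_eq_smul, map_smul, smul_smul]
  · have htk : Function.Injective (t ^ k) := by rw [coe_pow]; exact ht.iterate k
    exact (map_ne_zero_iff _ htk).mpr hv.2

theorem linearIndependent_pow_apply {s t : End K V} {γ μ : K} {v : V} {n : ℕ}
    (hγ : IsPrimitiveRoot γ n) (hst : s * t = γ • (t * s)) (ht : Function.Injective t)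
    (hv : s.HasEigenvector μ v) (hμ : μ ≠ 0) :
    LinearIndependent K (fun k : Fin n ↦ (t ^ (k : ℕ)) v) :=
  eigenvectors_linearIndependent' s (fun k : Fin n ↦ γ ^ (k : ℕ) * μ)
    (fun a b h ↦ Fin.ext (hγ.pow_inj a.2 b.2 (mul_right_cancel₀ hμ h))) _
    (fun k ↦ hv.pow_apply_of_mul_eq_smul_mul hst ht k)

theorem exists_hasEigenvector_mem [IsAlgClosed K] [FiniteDimensional K V] (f : End K V)
    {p : Submodule K V} (hp : p ≠ ⊥) (hfp : ∀ x ∈ p, f x ∈ p) :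
    ∃ μ v, v ∈ p ∧ f.HasEigenvector μ v := by
  have : Nontrivial p := Submodule.nontrivial_iff_ne_bot.mpr hp
  obtain ⟨μ, hμ⟩ := exists_eigenvalue (f.restrict hfp)
  obtain ⟨v, hv⟩ := hμ.exists_hasEigenvector
  exact ⟨μ, v, v.2, eigenspace_restrict_le_eigenspace f hfp μ ⟨v, hv.1, rfl⟩,
    by simpa using hv.2⟩

theorem exists_eq_smul_one_of_commute [IsAlgClosed K] [FiniteDimensional K V]
    {s t w : End K V} {γ : K} (hγ : IsPrimitiveRoot γ (finrank K V))
    (hst : s * t = γ • (t * s)) (hs : IsUnit s) (ht : IsUnit t)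
    (hws : Commute w s) (hwt : Commute w t) : ∃ c : K, w = c • 1 := by
  rcases subsingleton_or_nontrivial V with hV | hV
  · exact ⟨0, Subsingleton.elim _ _⟩
  obtain ⟨c, hc⟩ := exists_eigenvalue w
  obtain ⟨μ, v, hvE, hv⟩ :=
    s.exists_hasEigenvector_mem hc fun x hx ↦ mapsTo_genEigenspace_of_comm hws c 1 hx
  have hμ : μ ≠ 0 := by
    rintro rfl
    exact hv.2 ((isUnit_iff s).mp hs |>.injective (by simpa using hv.apply_eq_smul))
  have hspan := (linearIndependent_pow_apply hγ hst ((isUnit_iff t).mp ht).injective hv hμ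
    ).span_eq_top_of_card_eq_finrank' (by simp)
  have hE : w.eigenspace c = ⊤ := by
    refine top_le_iff.mp (hspan ▸ Submodule.span_le.mpr (Set.range_subset_iff.mpr fun k ↦ ?_))
    exact mapsTo_genEigenspace_of_comm (hwt.pow_right k) c 1 hvE
  exact ⟨c, LinearMap.ext fun x ↦ by
    simpa using mem_eigenspace_iff.mp (hE ▸ Submodule.mem_top : x ∈ w.eigenspace c)⟩

end Module.End

namespace Matrix

variable {ι : Type*} [Fintype ι]

theorem eq_zero_of_forall_trace_mul_skewHermitian {A : Matrix ι ι ℂ}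
    (h : ∀ x : Matrix ι ι ℂ, xᴴ = -x → (A * x).trace = 0) : A = 0 := by
  refine ext_iff_trace_mul_right.mpr fun B ↦ ?_
  have h₁ := h (B - Bᴴ) (by simp)
  have h₂ := h (Complex.I • (B + Bᴴ)) (by simp [add_comm])
  have hB : (2 : ℂ) • B = (B - Bᴴ) + (-Complex.I) • (Complex.I • (B + Bᴴ)) := by
    rw [smul_smul, neg_mul, Complex.I_mul_I, neg_neg, one_smul, two_smul]; abel
  have h2B : (A * ((2 : ℂ) • B)).trace = 0 := by
    rw [hB, mul_add, trace_add, h₁, mul_smul_comm, trace_smul, h₂, smul_zero, add_zero]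
  simpa [mul_smul_comm] using h2B

theorem eq_of_forall_trace_mul_sub_eq_zero {w a b c d : Matrix ι ι ℂ}
    (h : ∀ x : Matrix ι ι ℂ, xᴴ = -x → (w * (a * x * b - c * x * d)).trace = 0) :
    b * w * a = d * w * c := by
  refine sub_eq_zero.mp (eq_zero_of_forall_trace_mul_skewHermitian fun x hx ↦ ?_)
  rw [← h x hx, sub_mul, mul_sub, trace_sub, trace_sub, mul_assoc, mul_assoc, trace_mul_comm b,
    mul_assoc d, mul_assoc d, trace_mul_comm d]
  simp only [mul_assoc]

variable [DecidableEq ι]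

theorem isUnit_det_of_commutator_eq_smul_one {R : Type*} [CommRing R] {s t : Matrix ι ι R}
    {γ : R} (hγ : IsUnit γ) (h : s * t * s⁻¹ * t⁻¹ = γ • 1) : IsUnit s.det ∧ IsUnit t.det := by
  have hu : IsUnit (s.det * t.det * s⁻¹.det * t⁻¹.det) := by
    rw [← det_mul, ← det_mul, ← det_mul, h, det_smul, det_one, mul_one]
    exact hγ.pow _
  exact ⟨isUnit_nonsing_inv_det_iff.mp (isUnit_of_mul_isUnit_right (isUnit_of_mul_isUnit_left hu)),
    isUnit_nonsing_inv_det_iff.mp (isUnit_of_mul_isUnit_right hu)⟩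

theorem exists_eq_smul_one_of_commute {K : Type*} [Field K] [IsAlgClosed K]
    {s t w : Matrix ι ι K} {γ : K} (hγ : IsPrimitiveRoot γ (Fintype.card ι))
    (hst : s * t = γ • (t * s)) (hs : IsUnit s) (ht : IsUnit t)
    (hws : Commute w s) (hwt : Commute w t) : ∃ c : K, w = c • 1 := by
  let e : Matrix ι ι K ≃ₐ[K] Module.End K (ι → K) := toLinAlgEquiv'
  obtain ⟨c, hc⟩ := Module.End.exists_eq_smul_one_of_commute (s := e s) (t := e t) (w := e w)
    (by simpa using hγ) (by simpa using congrArg e hst) (hs.map e) (ht.map e) (hws.map e)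
    (hwt.map e)
  exact ⟨c, e.injective (by simpa using hc)⟩

noncomputable def commutatorDifferential (s t x y : Matrix ι ι ℂ) : Matrix ι ι ℂ :=
  x * t * s⁻¹ * t⁻¹ + s * y * s⁻¹ * t⁻¹ - s * t * s⁻¹ * x * s⁻¹ * t⁻¹ - s * t * s⁻¹ * t⁻¹ * y * t⁻¹

variable {s t w : Matrix ι ι ℂ} [Invertible s] [Invertible t] {γ : ℂ}

theorem commute_of_forall_trace_mul_commutatorDifferential_left (hγ : γ ≠ 0)
    (hst : s * t * s⁻¹ * t⁻¹ = γ • 1)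
    (h : ∀ x : Matrix ι ι ℂ, xᴴ = -x → (w * commutatorDifferential s t x 0).trace = 0) :
    Commute w t := by
  have key := eq_of_forall_trace_mul_sub_eq_zero (w := w) (a := 1) (b := t * s⁻¹ * t⁻¹)
    (c := s * t * s⁻¹) (d := s⁻¹ * t⁻¹) fun x hx ↦ by
      simpa [commutatorDifferential, mul_assoc] using h x hx
  have h₁ : t * s⁻¹ * t⁻¹ = γ • s⁻¹ := by simpa [mul_assoc] using congrArg (s⁻¹ * ·) hst
  have h₂ : s * t * s⁻¹ = γ • t := by simpa [mul_assoc] using congrArg (· * t) hst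
  rw [h₁, h₂, mul_one, smul_mul_assoc, mul_smul_comm, smul_right_inj hγ] at key
  calc w * t = t * (s * (s⁻¹ * t⁻¹ * w * t)) := by simp [mul_assoc]
    _ = t * w := by rw [← key]; simp

theorem commute_of_forall_trace_mul_commutatorDifferential_right
    (hst : s * t * s⁻¹ * t⁻¹ = γ • 1)
    (h : ∀ y : Matrix ι ι ℂ, yᴴ = -y → (w * commutatorDifferential s t 0 y).trace = 0) :
    Commute w s := by
  have key := eq_of_forall_trace_mul_sub_eq_zero (w := w) (a := s) (b := s⁻¹ * t⁻¹)
    (c := s * t * s⁻¹ * t⁻¹) (d := t⁻¹) fun y hy ↦ by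
      simpa [commutatorDifferential, mul_assoc] using h y hy
  have hconj : γ • (t * s * t⁻¹) = s := by
    simpa [mul_assoc] using (congrArg (· * (t * s * t⁻¹)) hst).symm
  rw [hst, mul_smul_comm, mul_one] at key
  calc w * s = t * s * (s⁻¹ * t⁻¹ * w * s) := by simp [mul_assoc]
    _ = γ • (t * s * t⁻¹) * w := by rw [key, mul_smul_comm, smul_mul_assoc]; simp [mul_assoc]
    _ = s * w := by rw [hconj]

end Matrix

theorem regular_value_of_commutator_map_general
    (n : ℕ) (hn : 1 ≤ n) (γ : ℂ)
    (hγ : γ ^ n = 1 ∧ ∀ m : ℕ, 0 < m → m < n → γ ^ m ≠ 1)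
    (s t : Matrix (Fin n) (Fin n) ℂ)
    (hst : s * t * s⁻¹ * t⁻¹ = γ • (1 : Matrix (Fin n) (Fin n) ℂ))
    (w : Matrix (Fin n) (Fin n) ℂ)
    (hwtr : w.trace = 0)
    (horth : ∀ x y : Matrix (Fin n) (Fin n) ℂ, xᴴ = -x → yᴴ = -y →
      (w * (x * t * s⁻¹ * t⁻¹ + s * y * s⁻¹ * t⁻¹
            - s * t * s⁻¹ * x * s⁻¹ * t⁻¹ - s * t * s⁻¹ * t⁻¹ * y * t⁻¹)).trace = 0) :
    w = 0 := by
  have hprim : IsPrimitiveRoot γ n := .mk_of_lt γ hn hγ.1 hγ.2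
  have hγ0 : γ ≠ 0 := hprim.ne_zero (by omega)
  obtain ⟨hs, ht⟩ := isUnit_det_of_commutator_eq_smul_one hγ0.isUnit hst
  have : Invertible s := invertibleOfIsUnitDet s hs
  have : Invertible t := invertibleOfIsUnitDet t ht
  have hwt := commute_of_forall_trace_mul_commutatorDifferential_left hγ0 hst
    fun x hx ↦ horth x 0 hx (by simp)
  have hws := commute_of_forall_trace_mul_commutatorDifferential_right hst
    fun y hy ↦ horth 0 y (by simp) hy
  have hcomm : s * t = γ • (t * s) := by simpa [mul_assoc] using congrArg (· * (t * s)) hst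
  obtain ⟨c, rfl⟩ := exists_eq_smul_one_of_commute (by simpa using hprim) hcomm
    (isUnit_of_invertible s) (isUnit_of_invertible t) hws hwt
  have hc : c = 0 := by simpa [show (n : ℂ) ≠ 0 by exact_mod_cast (by omega : n ≠ 0)] using hwtr
  rw [hc, zero_smul]

/-- **`γ·I_n` is a regular value of the commutator map `μ : U_n × U_n → SU_n`.**
Let `γ ∈ ℂ` be a primitive `n`-th root of unity, and let `s, t` be unitary `n × n`
matrices with `s t s⁻¹ t⁻¹ = γ • I_n`.  If `w` is a traceless skew-Hermitian matrix that
is trace-orthogonal to the image of the differential of `μ` at `(s,t)`, i.e.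
`trace(w · (x t s⁻¹ t⁻¹ + s y s⁻¹ t⁻¹ - s t s⁻¹ x s⁻¹ t⁻¹ - s t s⁻¹ t⁻¹ y t⁻¹)) = 0`
for all skew-Hermitian `x, y`, then `w = 0`. -/
theorem regular_value_of_commutator_map
    (n : ℕ) (hn : 1 ≤ n) (γ : ℂ)
    (hγ : γ ^ n = 1 ∧ ∀ m : ℕ, 0 < m → m < n → γ ^ m ≠ 1)
    (s t : Matrix (Fin n) (Fin n) ℂ)
    (hs : sᴴ * s = 1) (ht : tᴴ * t = 1)
    (hst : s * t * s⁻¹ * t⁻¹ = γ • (1 : Matrix (Fin n) (Fin n) ℂ))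
    (w : Matrix (Fin n) (Fin n) ℂ)
    (hw : wᴴ = -w) (hwtr : w.trace = 0)
    (horth : ∀ x y : Matrix (Fin n) (Fin n) ℂ, xᴴ = -x → yᴴ = -y →
      (w * (x * t * s⁻¹ * t⁻¹ + s * y * s⁻¹ * t⁻¹
            - s * t * s⁻¹ * x * s⁻¹ * t⁻¹ - s * t * s⁻¹ * t⁻¹ * y * t⁻¹)).trace = 0) :
    w = 0 :=
  regular_value_of_commutator_map_general n hn γ hγ s t hst w hwtr horth
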